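/- Let t_{m,k} be the number of rooted forests on m labeled vertices with exactly k rooted trees. Then for all m ≥ 1 and all integers x: ∑_{k=1}^{m} t_{m,k} x^k = x(x+m)^{m-1}. -/

import Mathlib

/-!
Orienting every edge of a rooted forest towards the root of its tree turns it into an acyclic
parent map `P : V → Option V` with the roots sent to `none`, and conversely a forest with one
root per tree determines its parent map. Let `t k` count such maps with `k` roots on `n`
vertices. Deleting the parent edge of a non-root `c` and hanging the tree of a root `c` below a
vertex `p` outside that tree are inverse operations, so double counting gives
`t k * (n - k) = t (k + 1) * (k * n)`. Starting from `t n = 1` this yields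
`t (j + 1) = (n - 1).choose j * n ^ (n - 1 - j)`, and the identity is the binomial expansion of
`x * (x + n) ^ (n - 1)`.
-/

/-- `rootedForests m k` is the number of rooted forests on `m` labeled vertices
with exactly `k` rooted trees. -/
noncomputable def rootedForests (m k : ℕ) : ℕ :=
  Nat.card {F : SimpleGraph (Fin m) × Finset (Fin m) //
    F.1.IsAcyclic ∧
    (∀ c : F.1.ConnectedComponent, ∃! v, v ∈ F.2 ∧ F.1.connectedComponentMk v = c) ∧
    F.2.card = k}

open Finset Function

namespace SimpleGraph

variable {V : Type*} {G : SimpleGraph V} {u v : V}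

theorem Reachable.iff_of_forall_adj {p : V → Prop} (hp : ∀ x y, G.Adj x y → (p x ↔ p y))
    (h : G.Reachable u v) : p u ↔ p v := by
  obtain ⟨w⟩ := h
  induction w with
  | nil => rfl
  | cons hadj _ ih => exact (hp _ _ hadj).trans ih

theorem Reachable.exists_adj_dist_lt (h : G.Reachable u v) (hne : u ≠ v) :
    ∃ w, G.Adj u w ∧ G.dist w v < G.dist u v := by
  obtain ⟨p, hp⟩ := h.exists_walk_length_eq_dist
  cases p with
  | nil => exact absurd rfl hne
  | cons hadj q =>
    refine ⟨_, hadj, ?_⟩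
    have := dist_le q
    rw [Walk.length_cons] at hp
    omega

end SimpleGraph

namespace ParentMap

/- `P v = some w` makes `w` the parent of `v`, and `P v = none` makes `v` a root. -/

variable {V : Type*} {P Q : V → Option V} {u v w c p : V}

def Reaches (P : V → Option V) : V → V → Prop :=
  Relation.ReflTransGen fun v w => P v = some w

def IsAcyclic (P : V → Option V) : Prop :=
  ∃ h : V → ℕ, ∀ v w, P v = some w → h w < h v

theorem IsAcyclic.induction (hP : IsAcyclic P) {motive : V → Prop}
    (step : ∀ v, (∀ w, P v = some w → motive w) → motive v) (v : V) : motive v := by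
  obtain ⟨h, hh⟩ := hP
  exact (InvImage.wf h wellFounded_lt).induction v fun v ih => step v fun w hw => ih w (hh v w hw)

theorem IsAcyclic.not_reaches_of_parent (hP : IsAcyclic P) (hvw : P v = some w) :
    ¬ Reaches P w v := by
  obtain ⟨h, hh⟩ := hP
  have h_anti : ∀ {x y}, Reaches P x y → h y ≤ h x := by
    intro x y hxy
    induction hxy with
    | refl => rfl
    | tail _ hyz ih => exact ((hh _ _ hyz).trans_le ih).le
  exact fun hwv => (h_anti hwv).not_gt (hh v w hvw)

theorem IsAcyclic.exists_reaches_root (hP : IsAcyclic P) (v : V) :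
    ∃ r, Reaches P v r ∧ P r = none := by
  induction v using hP.induction with
  | step v ih =>
    cases hv : P v with
    | none => exact ⟨v, .refl, hv⟩
    | some w =>
      obtain ⟨r, hwr, hr⟩ := ih w hv
      exact ⟨r, .head hv hwr, hr⟩

theorem Reaches.eq_of_root (h : Reaches P u v) (hu : P u = none) : v = u := by
  rcases h.cases_head with huv | ⟨w, huw, -⟩
  · exact huv.symm
  · simp [hu] at huw

theorem IsAcyclic.existsUnique_root (hP : IsAcyclic P) (v : V) :
    ∃! r, Reaches P v r ∧ P r = none := by
  obtain ⟨r, hvr, hr⟩ := hP.exists_reaches_root v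
  refine ⟨r, ⟨hvr, hr⟩, fun r' ⟨hvr', hr'⟩ => ?_⟩
  have h_functional : Relator.RightUnique fun v w => P v = some w :=
    fun _ _ _ h h' => Option.some_injective _ (h.symm.trans h')
  rcases Relation.ReflTransGen.total_of_right_unique h_functional hvr hvr' with h | h
  · exact Reaches.eq_of_root h hr
  · exact (Reaches.eq_of_root h hr').symm

theorem reaches_iff_of_parent (hxy : P u = some v) (hu : u ≠ w) :
    Reaches P u w ↔ Reaches P v w := by
  refine ⟨fun h => ?_, .head hxy⟩
  rcases h.cases_head with huw | ⟨v', huv', hv'w⟩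
  · exact absurd huw hu
  · obtain rfl := Option.some_inj.mp (hxy.symm.trans huv')
    exact hv'w

theorem Reaches.reachable {H : SimpleGraph V} (hH : ∀ x y, P x = some y → H.Adj x y)
    (h : Reaches P u v) : H.Reachable u v :=
  (SimpleGraph.reachable_iff_reflTransGen u v).mpr (Relation.ReflTransGen.mono hH _ _ h)

section Update

variable [DecidableEq V]

theorem IsAcyclic.update_none (hP : IsAcyclic P) (c : V) :
    IsAcyclic (update P c none) := by
  obtain ⟨h, hh⟩ := hP
  refine ⟨h, fun v w hvw => hh v w ?_⟩
  by_cases hvc : v = c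
  · simp [hvc] at hvw
  · rwa [update_of_ne hvc] at hvw

/-- Hanging the tree of the root `c` below a vertex `p` of another tree: the heights of the
moved tree are shifted above the height of `p`. -/
theorem IsAcyclic.update_some (hQ : IsAcyclic Q) (hc : Q c = none)
    (hp : ¬ Reaches Q p c) : IsAcyclic (update Q c (some p)) := by
  classical
  obtain ⟨h, hh⟩ := hQ
  refine ⟨fun v => if Reaches Q v c then h v + h p + 1 else h v, fun v w hvw => ?_⟩
  by_cases hvc : v = c
  · subst hvc
    simp only [update_self, Option.some_inj] at hvw
    subst hvw
    dsimp only
    rw [if_neg hp, if_pos .refl]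
    omega
  · rw [update_of_ne hvc] at hvw
    have := hh v w hvw
    simp only [reaches_iff_of_parent hvw hvc]
    split_ifs <;> omega

theorem Reaches.of_update_none (h : Reaches (update P c none) u v) :
    Reaches P u v := by
  refine Relation.ReflTransGen.mono (fun x y hxy => ?_) _ _ h
  by_cases hxc : x = c
  · simp [hxc] at hxy
  · rwa [update_of_ne hxc] at hxy

end Update

section Graph

def graph (P : V → Option V) : SimpleGraph V :=
  SimpleGraph.fromRel fun v w => P v = some w

theorem IsAcyclic.graph_adj_of_parent (hP : IsAcyclic P) (hvw : P v = some w) :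
    (graph P).Adj v w :=
  ⟨fun h => hP.not_reaches_of_parent hvw (h ▸ .refl), .inl hvw⟩

theorem reaches_iff_of_reachable {H : SimpleGraph V} (hH : H ≤ graph P)
    (ht : ∀ x y, H.Adj x y → P x = some y → x ≠ w) (huv : H.Reachable u v) :
    Reaches P u w ↔ Reaches P v w := by
  refine huv.iff_of_forall_adj (p := (Reaches P · w)) fun x y hxy => ?_
  rcases (hH hxy).2 with h | h
  · exact reaches_iff_of_parent h (ht x y hxy h)
  · exact (reaches_iff_of_parent h (ht y x hxy.symm h)).symm

theorem IsAcyclic.isBridge_of_parent (hP : IsAcyclic P) (hvw : P v = some w) :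
    (graph P).IsBridge s(v, w) := by
  intro hreach
  refine hP.not_reaches_of_parent hvw
    ((reaches_iff_of_reachable (SimpleGraph.deleteEdges_le _) ?_ hreach).mp .refl)
  rintro x y hxy hxy' rfl
  rw [hvw, Option.some_inj] at hxy'
  subst hxy'
  exact (SimpleGraph.deleteEdges_adj.mp hxy).2 rfl

theorem IsAcyclic.graph_isAcyclic (hP : IsAcyclic P) : (graph P).IsAcyclic := by
  refine SimpleGraph.isAcyclic_iff_forall_adj_isBridge.mpr fun v w hvw => ?_
  rcases hvw.2 with h | h
  · exact hP.isBridge_of_parent h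
  · exact Sym2.eq_swap ▸ hP.isBridge_of_parent h

end Graph

section Roots

variable [Fintype V]

def roots (P : V → Option V) : Finset V := {v | P v = none}

@[simp] theorem mem_roots : v ∈ roots P ↔ P v = none := by simp [roots]

theorem IsAcyclic.existsUnique_mem_roots (hP : IsAcyclic P) (C : (graph P).ConnectedComponent) :
    ∃! r, r ∈ roots P ∧ (graph P).connectedComponentMk r = C := by
  induction C using SimpleGraph.ConnectedComponent.ind with
  | h v =>
    obtain ⟨r, hvr, hr⟩ := hP.exists_reaches_root v
    refine ⟨r, ⟨mem_roots.mpr hr, (SimpleGraph.ConnectedComponent.sound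
      (hvr.reachable fun _ _ => hP.graph_adj_of_parent)).symm⟩, fun r' ⟨hr', hr'v⟩ => ?_⟩
    have h_inv := reaches_iff_of_reachable le_rfl (fun x y _ hxy hxr => by simp_all)
      (SimpleGraph.ConnectedComponent.exact hr'v) (w := r)
    exact (Reaches.eq_of_root (h_inv.mpr hvr) (mem_roots.mp hr')).symm

variable {G : SimpleGraph V} {R : Finset V}

/-- If the edge `vw` were no parent edge, the paths to the roots from `v` and from `w` would
avoid it and end at the same root, so `vw` would not be a bridge. -/
theorem parent_or_parent_of_adj
    (hR : ∀ C : G.ConnectedComponent, ∃! r, r ∈ R ∧ G.connectedComponentMk r = C)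
    (hG : G.IsAcyclic) (hP : IsAcyclic P) (hPG : ∀ x y, P x = some y → G.Adj x y)
    (hPR : roots P ⊆ R) (hvw : G.Adj v w) :
    P v = some w ∨ P w = some v := by
  by_contra! hne
  have hPH : ∀ x y, P x = some y → (G.deleteEdges {s(v, w)}).Adj x y := by
    refine fun x y hxy => SimpleGraph.deleteEdges_adj.mpr ⟨hPG x y hxy, fun he => ?_⟩
    rcases Sym2.eq_iff.mp (Set.mem_singleton_iff.mp he) with ⟨rfl, rfl⟩ | ⟨rfl, rfl⟩
    · exact hne.1 hxy
    · exact hne.2 hxy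
  obtain ⟨r, hvr, hr⟩ := hP.exists_reaches_root v
  obtain ⟨r', hwr', hr'⟩ := hP.exists_reaches_root w
  have hrr' : r = r' := (hR (G.connectedComponentMk v)).unique
    ⟨hPR (mem_roots.mpr hr), (SimpleGraph.ConnectedComponent.sound (hvr.reachable hPG)).symm⟩
    ⟨hPR (mem_roots.mpr hr'), SimpleGraph.ConnectedComponent.sound
      ((hwr'.reachable hPG).symm.trans hvw.symm.reachable)⟩
  subst hrr'
  exact SimpleGraph.isAcyclic_iff_forall_adj_isBridge.mp hG hvw
    ((hvr.reachable hPH).trans (hwr'.reachable hPH).symm)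

theorem IsAcyclic.eq_of_graph_eq_of_roots_eq (hP : IsAcyclic P) (hQ : IsAcyclic Q)
    (hgraph : graph P = graph Q) (hroots : roots P = roots Q) : P = Q := by
  funext v
  induction v using hP.induction with
  | step v ih =>
    cases hv : P v with
    | none => exact (mem_roots.mp (hroots ▸ mem_roots.mpr hv)).symm
    | some w =>
      have hvw : (graph Q).Adj v w := by
        rw [← hgraph]
        exact hP.graph_adj_of_parent hv
      refine ((parent_or_parent_of_adj hQ.existsUnique_mem_roots hQ.graph_isAcyclic hQ
        (fun _ _ => hQ.graph_adj_of_parent) subset_rfl hvw).resolve_right fun hwv => ?_).symm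
      exact hP.not_reaches_of_parent hv (.single ((ih w hv).trans hwv))

end Roots

section Forest

variable {G : SimpleGraph V} {R : Finset V}
  (hR : ∀ C : G.ConnectedComponent, ∃! r, r ∈ R ∧ G.connectedComponentMk r = C)

noncomputable def forestRoot (v : V) : V := (hR (G.connectedComponentMk v)).exists.choose

theorem forestRoot_mem : forestRoot hR v ∈ R :=
  (hR (G.connectedComponentMk v)).exists.choose_spec.1

theorem reachable_forestRoot : G.Reachable v (forestRoot hR v) :=
  (SimpleGraph.ConnectedComponent.exact (hR (G.connectedComponentMk v)).exists.choose_spec.2).symm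

theorem eq_forestRoot (hu : u ∈ R) (hvu : G.Reachable v u) : u = forestRoot hR v :=
  (hR (G.connectedComponentMk v)).unique ⟨hu, (SimpleGraph.ConnectedComponent.sound hvu).symm⟩
    (hR (G.connectedComponentMk v)).exists.choose_spec

theorem forestRoot_eq_of_adj (hvw : G.Adj v w) : forestRoot hR w = forestRoot hR v :=
  eq_forestRoot hR (forestRoot_mem hR) (hvw.reachable.trans (reachable_forestRoot hR))

theorem ne_forestRoot (hv : v ∉ R) : v ≠ forestRoot hR v :=
  (ne_of_mem_of_not_mem (forestRoot_mem hR) hv).symm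

variable [DecidableEq V]

noncomputable def ofForest (v : V) : Option V :=
  if hv : v ∈ R then none
  else some ((reachable_forestRoot hR).exists_adj_dist_lt
    (ne_forestRoot hR hv)).choose

theorem ofForest_eq_none_iff : ofForest hR v = none ↔ v ∈ R := by
  unfold ofForest
  split_ifs with hv <;> simp [hv]

theorem ofForest_eq_some (h : ofForest hR v = some w) :
    G.Adj v w ∧ G.dist w (forestRoot hR v) < G.dist v (forestRoot hR v) := by
  unfold ofForest at h
  split_ifs at h with hv
  rw [← Option.some_inj.mp h]
  exact ((reachable_forestRoot hR).exists_adj_dist_lt (ne_forestRoot hR hv)).choose_spec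

theorem ofForest_isAcyclic : IsAcyclic (ofForest hR) := by
  refine ⟨fun v => G.dist v (forestRoot hR v), fun v w hvw => ?_⟩
  obtain ⟨hadj, hlt⟩ := ofForest_eq_some hR hvw
  show G.dist w (forestRoot hR w) < G.dist v (forestRoot hR v)
  rwa [forestRoot_eq_of_adj hR hadj]

theorem roots_ofForest [Fintype V] : roots (ofForest hR) = R := by
  ext
  simp [ofForest_eq_none_iff]

theorem graph_ofForest [Fintype V] (hG : G.IsAcyclic) : graph (ofForest hR) = G := by
  ext v w
  refine ⟨fun ⟨_, h⟩ => h.elim (ofForest_eq_some hR · |>.1)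
    (ofForest_eq_some hR · |>.1.symm),
    fun hvw => ⟨hvw.ne, parent_or_parent_of_adj hR hG (ofForest_isAcyclic hR)
      (fun _ _ h => (ofForest_eq_some hR h).1) (roots_ofForest hR).le hvw⟩⟩

end Forest

section Count

variable [Fintype V]

theorem card_filter_ne_none : #{v | P v ≠ none} = Fintype.card V - #(roots P) := by
  rw [← card_univ, ← card_filter_add_card_filter_not (s := univ) (P · = none)]
  simp [roots]

open scoped Classical in
theorem IsAcyclic.sum_card_reaches (hP : IsAcyclic P) :
    ∑ c ∈ roots P, #{v | Reaches P v c} = Fintype.card V := by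
  have h_one (v : V) : #((roots P).bipartiteAbove (Reaches P) v) = 1 := by
    obtain ⟨r, hr, hr_unique⟩ := hP.existsUnique_root v
    refine card_eq_one.mpr ⟨r, ext fun c => ?_⟩
    simp only [mem_bipartiteAbove, mem_roots, mem_singleton]
    exact ⟨fun ⟨hc, hvc⟩ => hr_unique c ⟨hvc, hc⟩, fun hc => hc ▸ ⟨hr.2, hr.1⟩⟩
  calc ∑ c ∈ roots P, #{v | Reaches P v c}
      = ∑ v, #((roots P).bipartiteAbove (Reaches P) v) :=
        (sum_card_bipartiteAbove_eq_sum_card_bipartiteBelow _).symm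
    _ = Fintype.card V := by simp [h_one]

open scoped Classical in
theorem IsAcyclic.card_sigma_not_reaches {k : ℕ} (hP : IsAcyclic P) (hk : #(roots P) = k + 1) :
    #((roots P).sigma fun c => ({p | ¬ Reaches P p c} : Finset V)) = k * Fintype.card V := by
  have h_split : ∑ c ∈ roots P, (#{p | ¬ Reaches P p c} + #{p | Reaches P p c}) =
      (k + 1) * Fintype.card V := by
    simp_rw [add_comm (#{p | ¬ Reaches P p _}), card_filter_add_card_filter_not, card_univ,
      sum_const, hk, smul_eq_mul]
  rw [sum_add_distrib, hP.sum_card_reaches] at h_split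
  rw [card_sigma]
  linarith

variable [DecidableEq V]

open scoped Classical in
variable (V) in
noncomputable def acyclicMaps (k : ℕ) : Finset (V → Option V) :=
  {P | IsAcyclic P ∧ #(roots P) = k}

theorem mem_acyclicMaps {k : ℕ} : P ∈ acyclicMaps V k ↔ IsAcyclic P ∧ #(roots P) = k := by
  simp [acyclicMaps]

theorem card_rootedForests_eq (k : ℕ) :
    Nat.card {F : SimpleGraph V × Finset V // F.1.IsAcyclic ∧
      (∀ C : F.1.ConnectedComponent, ∃! v, v ∈ F.2 ∧ F.1.connectedComponentMk v = C) ∧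
      #F.2 = k} = #(acyclicMaps V k) := by
  rw [← Nat.card_eq_finsetCard]
  refine (Nat.card_congr (Equiv.ofBijective (fun P : acyclicMaps V k =>
    ⟨(graph P.1, roots P.1), (mem_acyclicMaps.mp P.2).1.graph_isAcyclic,
      (mem_acyclicMaps.mp P.2).1.existsUnique_mem_roots, (mem_acyclicMaps.mp P.2).2⟩)
    ⟨fun P Q hPQ => ?_, fun ⟨⟨G, R⟩, hG, hR, hk⟩ => ?_⟩)).symm
  · simp only [Subtype.mk.injEq, Prod.mk.injEq] at hPQ
    exact Subtype.ext ((mem_acyclicMaps.mp P.2).1.eq_of_graph_eq_of_roots_eq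
      (mem_acyclicMaps.mp Q.2).1 hPQ.1 hPQ.2)
  · refine ⟨⟨ofForest hR,
      mem_acyclicMaps.mpr ⟨ofForest_isAcyclic hR, by rw [roots_ofForest, hk]⟩⟩,
      Subtype.ext (Prod.ext (graph_ofForest hR hG) (roots_ofForest hR))⟩

theorem roots_update_some : roots (update P c (some p)) = (roots P).erase c := by
  ext v
  by_cases hv : v = c <;> simp [hv]

theorem roots_update_none : roots (update P c none) = insert c (roots P) := by
  ext v
  by_cases hv : v = c <;> simp [hv]

theorem update_none_mem_acyclicMaps {k : ℕ} (hP : P ∈ acyclicMaps V k) (hc : P c = some p) :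
    update P c none ∈ acyclicMaps V (k + 1) := by
  obtain ⟨hP, hk⟩ := mem_acyclicMaps.mp hP
  refine mem_acyclicMaps.mpr ⟨hP.update_none c, ?_⟩
  rw [roots_update_none, card_insert_of_notMem (by simp [hc]), hk]

theorem update_some_mem_acyclicMaps {k : ℕ} (hQ : Q ∈ acyclicMaps V (k + 1))
    (hc : c ∈ roots Q) (hp : ¬ Reaches Q p c) : update Q c (some p) ∈ acyclicMaps V k := by
  obtain ⟨hQ, hk⟩ := mem_acyclicMaps.mp hQ
  refine mem_acyclicMaps.mpr ⟨hQ.update_some (mem_roots.mp hc) hp, ?_⟩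
  rw [roots_update_some, card_erase_of_mem hc, hk, Nat.add_sub_cancel]

open scoped Classical in
theorem card_acyclicMaps_mul (k : ℕ) :
    #(acyclicMaps V k) * (Fintype.card V - k) = #(acyclicMaps V (k + 1)) * (k * Fintype.card V) :=
  calc #(acyclicMaps V k) * (Fintype.card V - k)
      = #((acyclicMaps V k).sigma fun P => ({c | P c ≠ none} : Finset V)) := by
        rw [card_sigma, sum_const_nat]
        intro P hP
        rw [card_filter_ne_none, (mem_acyclicMaps.mp hP).2]
    _ = #((acyclicMaps V (k + 1)).sigma fun Q =>
          (roots Q).sigma fun c => ({p | ¬ Reaches Q p c} : Finset V)) := by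
        refine card_nbij' (fun x => ⟨update x.1 x.2 none, x.2, (x.1 x.2).getD x.2⟩)
          (fun y => ⟨update y.1 y.2.1 (some y.2.2), y.2.1⟩) ?_ ?_ ?_ ?_
        · rintro ⟨P, c⟩ hPc
          obtain ⟨hP, hc⟩ := mem_sigma.mp hPc
          obtain ⟨p, hp : P c = some p⟩ := Option.ne_none_iff_exists'.mp (mem_filter.mp hc).2
          simp only [coe_sigma, Set.mem_sigma_iff, mem_coe, mem_filter, mem_univ, true_and, hp,
            Option.getD_some]
          exact ⟨update_none_mem_acyclicMaps hP hp, by simp,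
            fun h => (mem_acyclicMaps.mp hP).1.not_reaches_of_parent hp h.of_update_none⟩
        · rintro ⟨Q, c, p⟩ hQcp
          simp only [coe_sigma, Set.mem_sigma_iff, mem_coe, mem_filter, mem_univ, true_and] at hQcp
          obtain ⟨hQ, hc, hp⟩ := hQcp
          exact mem_sigma.mpr ⟨update_some_mem_acyclicMaps hQ hc hp, by simp⟩
        · rintro ⟨P, c⟩ hPc
          obtain ⟨p, hp : P c = some p⟩ :=
            Option.ne_none_iff_exists'.mp (mem_filter.mp (mem_sigma.mp hPc).2).2
          simp [hp]
        · rintro ⟨Q, c, p⟩ hQcp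
          simp only [coe_sigma, Set.mem_sigma_iff, mem_coe, mem_filter, mem_univ, true_and] at hQcp
          simp [(mem_roots.mp hQcp.2.1)]
    _ = #(acyclicMaps V (k + 1)) * (k * Fintype.card V) := by
        rw [card_sigma, sum_const_nat]
        intro Q hQ
        obtain ⟨hQ, hk⟩ := mem_acyclicMaps.mp hQ
        exact hQ.card_sigma_not_reaches hk

theorem card_acyclicMaps_card : #(acyclicMaps V (Fintype.card V)) = 1 := by
  refine card_eq_one.mpr ⟨fun _ => none, ext fun P => ?_⟩
  rw [mem_acyclicMaps, mem_singleton]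
  constructor
  · rintro ⟨-, hP⟩
    funext v
    exact mem_roots.mp ((eq_univ_of_card _ hP).symm ▸ mem_univ v)
  · rintro rfl
    refine ⟨⟨fun _ => 0, by simp⟩, ?_⟩
    simp [roots]

theorem card_acyclicMaps_succ {j : ℕ} (hj : j < Fintype.card V) :
    #(acyclicMaps V (j + 1)) =
      (Fintype.card V - 1).choose j * Fintype.card V ^ (Fintype.card V - 1 - j) := by
  suffices h : ∀ d j, Fintype.card V = j + 1 + d →
      #(acyclicMaps V (j + 1)) = (j + d).choose j * (j + 1 + d) ^ d by
    rw [h (Fintype.card V - 1 - j) j (by omega)]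
    congr 2 <;> omega
  intro d
  induction d with
  | zero =>
    intro j hj
    rw [← add_zero (j + 1), ← hj, card_acyclicMaps_card]
    simp
  | succ d ih =>
    intro j hj
    have h_rec := card_acyclicMaps_mul (V := V) (j + 1)
    rw [ih (j + 1) (by omega), hj, show j + 1 + (d + 1) - (j + 1) = d + 1 by omega] at h_rec
    have h_choose := Nat.choose_succ_right_eq (j + (d + 1)) j
    rw [show j + (d + 1) - j = d + 1 by omega] at h_choose
    refine Nat.eq_of_mul_eq_mul_right (Nat.succ_pos d) ?_
    calc #(acyclicMaps V (j + 1)) * (d + 1)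
        = (j + (d + 1)).choose (j + 1) * (j + 1) * (j + 1 + (d + 1)) ^ (d + 1) := by
          rw [h_rec, show j + 1 + d = j + (d + 1) by omega,
            show j + 1 + 1 + d = j + 1 + (d + 1) by omega]
          ring
      _ = (j + (d + 1)).choose j * (j + 1 + (d + 1)) ^ (d + 1) * (d + 1) := by
          rw [h_choose]
          ring

end Count

end ParentMap

/-- For all `m ≥ 1` and all integers `x`: `∑_{k=1}^{m} t_{m,k} x^k = x(x+m)^{m-1}`. -/
theorem stmt_10 (m : ℕ) (hm : 1 ≤ m) (x : ℤ) :
    ∑ k ∈ Finset.Icc 1 m, (rootedForests m k : ℤ) * x ^ k = x * (x + m) ^ (m - 1) := by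
  have h_count (j : ℕ) (hj : j < m) :
      rootedForests m (j + 1) = (m - 1).choose j * m ^ (m - 1 - j) := by
    rw [rootedForests, ParentMap.card_rootedForests_eq,
      ParentMap.card_acyclicMaps_succ (by simpa using hj), Fintype.card_fin]
  rw [add_pow, Nat.sub_add_cancel hm, mul_sum, ← Ico_add_one_right_eq_Icc, sum_Ico_eq_sum_range,
    Nat.add_sub_cancel]
  refine sum_congr rfl fun j hj => ?_
  rw [add_comm 1 j, h_count j (mem_range.mp hj)]
  push_cast
  ring
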